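/- arXiv:1309.6798 — 2 statements merged into one kernel-verified Lean document; each statement's English description precedes it below -/
import Mathlib

section
/- Let f : [a,b] ⊆ [0,∞) → [0,∞) be continuous and convex, 0 ≤ a < b, and p > 0. Then ∫_a^b (x-a)^p (b-x)^p f(x) f(a+b-x) dx ≤ (b-a)^{2p+1} { (f(a)^2+f(b)^2) B(p+1,p+3) + 2 f(a) f(b) B(p+2,p+2) }. -/
open MeasureTheory Set

noncomputable def eulerBeta (m n : ℝ) : ℝ := ∫ t in (0:ℝ)..1, t ^ (m - 1) * (1 - t) ^ (n - 1)

/-! Substituting `x = (1 - t) a + t b` turns the integral into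
`(b - a)^(2p+1) ∫₀¹ t^p (1-t)^p f(x) f(a + b - x) dt`. Convexity bounds `f(x)` and `f(a + b - x)` by
the chords `(1-t) f(a) + t f(b)` and `t f(a) + (1-t) f(b)`, and AM–GM bounds the product of these by
half the sum of their squares. Integrating that quadratic in `t` against the weight `t^p (1-t)^p`
gives Beta values, which combine by the symmetry `B(m, n) = B(n, m)`. -/

lemma eulerBeta_comm (m n : ℝ) : eulerBeta m n = eulerBeta n m := by
  simpa [eulerBeta, mul_comm] using
    (intervalIntegral.integral_comp_sub_left (fun t : ℝ => t ^ (m - 1) * (1 - t) ^ (n - 1)) 1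
      (a := 0) (b := 1)).symm

lemma continuous_rpow_mul_one_sub_rpow {q r : ℝ} (hq : 0 ≤ q) (hr : 0 ≤ r) :
    Continuous fun t : ℝ => t ^ q * (1 - t) ^ r :=
  (Real.continuous_rpow_const hq).mul
    ((Real.continuous_rpow_const hr).comp (continuous_const.sub continuous_id))

lemma integral_rpow_mul_one_sub_rpow (q r : ℝ) :
    ∫ t in (0:ℝ)..1, t ^ q * (1 - t) ^ r = eulerBeta (q + 1) (r + 1) := by
  simp [eulerBeta]

lemma integral_rpow_mul_one_sub_rpow_mul_sq_add_sq {p : ℝ} (hp : 0 ≤ p) (u v : ℝ) :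
    ∫ t in (0:ℝ)..1, t ^ p * (1 - t) ^ p *
        ((((1 - t) * u + t * v) ^ 2 + (t * u + (1 - t) * v) ^ 2) / 2) =
      (u ^ 2 + v ^ 2) * eulerBeta (p + 1) (p + 3) + 2 * u * v * eulerBeta (p + 2) (p + 2) := by
  have hint : ∀ q r : ℝ, 0 ≤ q → 0 ≤ r →
      IntervalIntegrable (fun t : ℝ => t ^ q * (1 - t) ^ r) volume 0 1 := fun q r hq hr =>
    (continuous_rpow_mul_one_sub_rpow hq hr).intervalIntegrable 0 1
  have hpoint : EqOn
      (fun t : ℝ => t ^ p * (1 - t) ^ p *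
        ((((1 - t) * u + t * v) ^ 2 + (t * u + (1 - t) * v) ^ 2) / 2))
      (fun t => (u ^ 2 + v ^ 2) / 2 * (t ^ p * (1 - t) ^ (p + 2)) +
        ((u ^ 2 + v ^ 2) / 2 * (t ^ (p + 2) * (1 - t) ^ p) +
          2 * u * v * (t ^ (p + 1) * (1 - t) ^ (p + 1))))
      (uIcc 0 1) := by
    intro t ht
    rw [uIcc_of_le zero_le_one] at ht
    have h1 : ∀ x : ℝ, 0 ≤ x → x ^ (p + 1) = x ^ p * x := fun x hx =>
      Real.rpow_add_one' hx (by positivity)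
    have h2 : ∀ x : ℝ, 0 ≤ x → x ^ (p + 2) = x ^ p * x ^ 2 := fun x hx => by
      rw [Real.rpow_add' hx (by positivity), Real.rpow_two]
    simp only [h1 t ht.1, h1 (1 - t) (sub_nonneg.2 ht.2), h2 t ht.1, h2 (1 - t) (sub_nonneg.2 ht.2)]
    ring
  have hp1 : 0 ≤ p + 1 := by linarith
  have hp2 : 0 ≤ p + 2 := by linarith
  rw [intervalIntegral.integral_congr hpoint,
    intervalIntegral.integral_add ((hint _ _ hp hp2).const_mul _)
      (((hint _ _ hp2 hp).const_mul _).add ((hint _ _ hp1 hp1).const_mul _)),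
    intervalIntegral.integral_add ((hint _ _ hp2 hp).const_mul _) ((hint _ _ hp1 hp1).const_mul _),
    intervalIntegral.integral_const_mul, intervalIntegral.integral_const_mul,
    intervalIntegral.integral_const_mul, integral_rpow_mul_one_sub_rpow,
    integral_rpow_mul_one_sub_rpow, integral_rpow_mul_one_sub_rpow, eulerBeta_comm (p + 2 + 1)]
  ring_nf

lemma ConvexOn.mul_apply_combo_swap_le {E : Type*} [AddCommGroup E] [Module ℝ E] {s : Set E}
    {f : E → ℝ} (hf : ConvexOn ℝ s f) (hnn : ∀ x ∈ s, 0 ≤ f x) {x y : E} (hx : x ∈ s)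
    (hy : y ∈ s) {t : ℝ} (ht0 : 0 ≤ t) (ht1 : t ≤ 1) :
    f ((1 - t) • x + t • y) * f (t • x + (1 - t) • y) ≤
      (((1 - t) * f x + t * f y) ^ 2 + (t * f x + (1 - t) * f y) ^ 2) / 2 := by
  have h1t : 0 ≤ 1 - t := sub_nonneg.2 ht1
  have hle₁ : f ((1 - t) • x + t • y) ≤ (1 - t) * f x + t * f y := hf.2 hx hy h1t ht0 (by ring)
  have hle₂ : f (t • x + (1 - t) • y) ≤ t * f x + (1 - t) * f y := hf.2 hx hy ht0 h1t (by ring)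
  calc f ((1 - t) • x + t • y) * f (t • x + (1 - t) • y)
      ≤ ((1 - t) * f x + t * f y) * (t * f x + (1 - t) * f y) :=
        mul_le_mul hle₁ hle₂ (hnn _ (hf.1 hx hy ht0 h1t (by ring)))
          (by have := hnn x hx; have := hnn y hy; positivity)
    _ ≤ _ := by linarith [two_mul_le_add_sq ((1 - t) * f x + t * f y) (t * f x + (1 - t) * f y)]

lemma integral_sub_rpow_mul_sub_rpow_mul {a b : ℝ} (hab : a < b) (p : ℝ) (g : ℝ → ℝ) :
    ∫ x in a..b, (x - a) ^ p * (b - x) ^ p * g x =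
      (b - a) ^ (2 * p + 1) * ∫ t in (0:ℝ)..1, t ^ p * (1 - t) ^ p * g ((1 - t) * a + t * b) := by
  have hL : 0 < b - a := sub_pos.2 hab
  have hsub := intervalIntegral.smul_integral_comp_mul_add
    (fun x => (x - a) ^ p * (b - x) ^ p * g x) (b - a) a (a := 0) (b := 1)
  simp only [mul_zero, zero_add, mul_one, sub_add_cancel, smul_eq_mul] at hsub
  rw [← hsub, ← intervalIntegral.integral_const_mul, ← intervalIntegral.integral_const_mul]
  refine intervalIntegral.integral_congr fun t ht => ?_
  rw [uIcc_of_le zero_le_one] at ht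
  rw [add_sub_cancel_right, show b - ((b - a) * t + a) = (b - a) * (1 - t) by ring,
    show (b - a) * t + a = (1 - t) * a + t * b by ring, Real.mul_rpow hL.le ht.1,
    Real.mul_rpow hL.le (sub_nonneg.2 ht.2), show 2 * p + 1 = p + p + 1 by ring,
    Real.rpow_add hL, Real.rpow_add hL, Real.rpow_one]
  ring

lemma intervalIntegral.integral_mono_on_of_nonneg {f g : ℝ → ℝ} {a b : ℝ} (hab : a ≤ b)
    (hg : IntervalIntegrable g volume a b) (hf : ∀ x ∈ Ioc a b, 0 ≤ f x)
    (hfg : ∀ x ∈ Ioc a b, f x ≤ g x) :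
    ∫ x in a..b, f x ≤ ∫ x in a..b, g x := by
  rw [intervalIntegral.integral_of_le hab, intervalIntegral.integral_of_le hab]
  exact integral_mono_of_nonneg (ae_restrict_of_forall_mem measurableSet_Ioc hf) hg.1
    (ae_restrict_of_forall_mem measurableSet_Ioc hfg)

theorem cor_2_4_general (f : ℝ → ℝ) (a b : ℝ) (hab : a < b)
    (hnn : ∀ x ∈ Icc a b, 0 ≤ f x)
    (hconv : ConvexOn ℝ (Icc a b) f)
    (p : ℝ) (hp : 0 < p) :
    ∫ x in a..b, (x - a) ^ p * (b - x) ^ p * (f x * f (a + b - x)) ≤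
      (b - a) ^ (2 * p + 1) *
        ((f a ^ 2 + f b ^ 2) * eulerBeta (p + 1) (p + 3) +
          2 * f a * f b * eulerBeta (p + 2) (p + 2)) := by
  have ha : a ∈ Icc a b := left_mem_Icc.2 hab.le
  have hb : b ∈ Icc a b := right_mem_Icc.2 hab.le
  have hw : ∀ t ∈ Ioc (0:ℝ) 1, 0 ≤ t ^ p * (1 - t) ^ p := fun t ht =>
    mul_nonneg (Real.rpow_nonneg ht.1.le _) (Real.rpow_nonneg (sub_nonneg.2 ht.2) _)
  rw [integral_sub_rpow_mul_sub_rpow_mul hab, ← integral_rpow_mul_one_sub_rpow_mul_sq_add_sq hp.le]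
  refine mul_le_mul_of_nonneg_left ?_ (Real.rpow_nonneg (sub_pos.2 hab).le _)
  refine intervalIntegral.integral_mono_on_of_nonneg zero_le_one
    (((continuous_rpow_mul_one_sub_rpow hp.le hp.le).mul (by fun_prop)).intervalIntegrable 0 1)
    (fun t ht => ?_) (fun t ht => ?_) <;>
    rw [show a + b - ((1 - t) * a + t * b) = t * a + (1 - t) * b by ring]
  · have h1t : 0 ≤ 1 - t := sub_nonneg.2 ht.2
    exact mul_nonneg (hw t ht) (mul_nonneg (hnn _ (hconv.1 ha hb h1t ht.1.le (by ring)))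
      (hnn _ (hconv.1 ha hb ht.1.le h1t (by ring))))
  · exact mul_le_mul_of_nonneg_left (hconv.mul_apply_combo_swap_le hnn ha hb ht.1.le ht.2) (hw t ht)

theorem cor_2_4 (f : ℝ → ℝ) (a b : ℝ) (ha : 0 ≤ a) (hab : a < b)
    (hf : ContinuousOn f (Icc a b)) (hnn : ∀ x ∈ Icc a b, 0 ≤ f x)
    (hconv : ConvexOn ℝ (Icc a b) f)
    (p : ℝ) (hp : 0 < p) :
    ∫ x in a..b, (x - a) ^ p * (b - x) ^ p * (f x * f (a + b - x)) ≤
      (b - a) ^ (2 * p + 1) *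
        ((f a ^ 2 + f b ^ 2) * eulerBeta (p + 1) (p + 3) +
          2 * f a * f b * eulerBeta (p + 2) (p + 2)) :=
  cor_2_4_general f a b hab hnn hconv p hp
end

section
/- Let f : [a,b] ⊆ [0,∞) → [0,∞) be continuous, 0 ≤ a < b, with f in the Godunova–Levin class Q (i.e., f nonnegative and f(λx+(1-λ)y) ≤ f(x)/λ + f(y)/(1-λ) for all x,y ∈ [a,b], λ ∈ (0,1)), and p, q > 1. Then ∫_a^b (x-a)^p (b-x)^q f(x) f(a+b-x) dx ≤ ((b-a)^{p+q+1}/2) { (f(a)^2+f(b)^2)(B(p+1,q-1) + B(p-1,q+1)) + 4 f(a) f(b) B(p,q) }. -/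
/-!
Put `x = t b + (1 - t) a`, so that `a + b - x = t a + (1 - t) b`. The Godunova–Levin inequality
for the pairs `(b, a)` and `(a, b)` bounds `f x * f (a + b - x)` by
`(f b / t + f a / (1 - t)) * (f a / t + f b / (1 - t))`. Multiplied by `t ^ p * (1 - t) ^ q`, this
is a combination of the Beta integrands `t ^ p (1 - t) ^ (q - 2)`, `t ^ (p - 2) (1 - t) ^ q`,
`t ^ (p - 1) (1 - t) ^ (q - 1)`, and an AM-GM step rebalances its coefficients into the claimed
ones. Integrating over `t ∈ [0, 1]` gives the Beta functions.
-/

open MeasureTheory Set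

theorem intervalIntegral.integral_mono_of_nonneg_on_Ioo {μ : Measure ℝ} [NullSingletonClass μ]
    {f g : ℝ → ℝ} {a b : ℝ} (hab : a ≤ b) (hg : IntervalIntegrable g μ a b)
    (hf : ∀ x ∈ Ioo a b, 0 ≤ f x) (h : ∀ x ∈ Ioo a b, f x ≤ g x) :
    ∫ x in a..b, f x ∂μ ≤ ∫ x in a..b, g x ∂μ := by
  have hg' : IntegrableOn g (Ioo a b) μ := by
    rw [IntegrableOn, restrict_Ioo_eq_restrict_Ioc]; exact hg.1
  simp only [intervalIntegral.integral_of_le hab, integral_Ioc_eq_integral_Ioo]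
  exact integral_mono_of_nonneg (ae_restrict_of_forall_mem measurableSet_Ioo hf) hg'
    (ae_restrict_of_forall_mem measurableSet_Ioo h)

theorem intervalIntegrable_rpow_mul_one_sub_rpow {α β : ℝ} (hα : -1 < α) (hβ : -1 < β) :
    IntervalIntegrable (fun t : ℝ => t ^ α * (1 - t) ^ β) volume 0 1 := by
  -- on `(0, 1)` the real integrand is the norm of the complex Beta integrand
  have h := (Complex.betaIntegral_convergent (u := α + 1) (v := β + 1)
    (by simp; linarith) (by simp; linarith)).norm
  refine h.congr_uIoo fun t ht => ?_
  rw [uIoo_of_le zero_le_one] at ht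
  have h1t : 0 < 1 - t := sub_pos.2 ht.2
  simp only [norm_mul, Complex.norm_cpow_eq_rpow_re_of_pos ht.1]
  rw [← Complex.ofReal_one, ← Complex.ofReal_sub, Complex.norm_cpow_eq_rpow_re_of_pos h1t]
  simp

def GodunovaLevinOn (s : Set ℝ) (f : ℝ → ℝ) : Prop :=
  ∀ x ∈ s, ∀ y ∈ s, ∀ lam : ℝ, 0 < lam → lam < 1 →
    f (lam * x + (1 - lam) * y) ≤ f x / lam + f y / (1 - lam)

theorem GodunovaLevinOn.mul_comp_reflect_le {f : ℝ → ℝ} {a b t : ℝ}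
    (hQ : GodunovaLevinOn (Icc a b) f) (hnn : ∀ x ∈ Icc a b, 0 ≤ f x) (hab : a ≤ b)
    (ht₀ : 0 < t) (ht₁ : t < 1) :
    f (t * b + (1 - t) * a) * f (t * a + (1 - t) * b) ≤
      (f b / t + f a / (1 - t)) * (f a / t + f b / (1 - t)) := by
  have ha : a ∈ Icc a b := left_mem_Icc.2 hab
  have hb : b ∈ Icc a b := right_mem_Icc.2 hab
  have hmem : t * a + (1 - t) * b ∈ Icc a b :=
    convex_Icc a b ha hb ht₀.le (sub_pos.2 ht₁).le (add_sub_cancel t 1)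
  exact mul_le_mul (hQ b hb a ha t ht₀ ht₁) (hQ a ha b hb t ht₀ ht₁) (hnn _ hmem)
    (add_nonneg (div_nonneg (hnn b hb) ht₀.le) (div_nonneg (hnn a ha) (sub_pos.2 ht₁).le))

theorem sq_mul_sq_mul_div_add_div_le (A B t : ℝ) (ht₀ : 0 < t) (ht₁ : t < 1) :
    t ^ 2 * (1 - t) ^ 2 * ((B / t + A / (1 - t)) * (A / t + B / (1 - t))) ≤
      (A ^ 2 + B ^ 2) / 2 * (t ^ 2 + (1 - t) ^ 2) + 2 * A * B * (t * (1 - t)) := by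
  have h1t : 1 - t ≠ 0 := (sub_pos.2 ht₁).ne'
  have key : t ^ 2 * (1 - t) ^ 2 * ((B / t + A / (1 - t)) * (A / t + B / (1 - t))) =
      A * B * (t ^ 2 + (1 - t) ^ 2) + (A ^ 2 + B ^ 2) * (t * (1 - t)) := by
    field_simp
    ring
  -- the gap is `(A - B) ^ 2 * (2 * t - 1) ^ 2 / 2`
  nlinarith [sq_nonneg ((A - B) * (2 * t - 1))]

noncomputable def betaMajorant (A B p q t : ℝ) : ℝ :=
  (A ^ 2 + B ^ 2) / 2 * (t ^ p * (1 - t) ^ (q - 2) + t ^ (p - 2) * (1 - t) ^ q) +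
    2 * A * B * (t ^ (p - 1) * (1 - t) ^ (q - 1))

theorem rpow_mul_one_sub_rpow_mul_le_betaMajorant (A B p q : ℝ) {t : ℝ} (ht₀ : 0 < t)
    (ht₁ : t < 1) :
    t ^ p * (1 - t) ^ q * ((B / t + A / (1 - t)) * (A / t + B / (1 - t))) ≤
      betaMajorant A B p q t := by
  have h1t : 0 < 1 - t := sub_pos.2 ht₁
  have two : ∀ {s : ℝ} (r : ℝ), 0 < s → s ^ r = s ^ (r - 2) * s ^ 2 := fun r hs => by
    rw [← Real.rpow_natCast, ← Real.rpow_add hs]; norm_num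
  have one : ∀ {s : ℝ} (r : ℝ), 0 < s → s ^ (r - 1) = s ^ (r - 2) * s := fun r hs => by
    rw [← Real.rpow_add_one hs.ne']; ring_nf
  have hc : 0 ≤ t ^ (p - 2) * (1 - t) ^ (q - 2) := by positivity
  rw [betaMajorant, two p ht₀, two q h1t, one p ht₀, one q h1t]
  calc _ = t ^ (p - 2) * (1 - t) ^ (q - 2) *
        (t ^ 2 * (1 - t) ^ 2 * ((B / t + A / (1 - t)) * (A / t + B / (1 - t)))) := by ring
    _ ≤ t ^ (p - 2) * (1 - t) ^ (q - 2) *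
        ((A ^ 2 + B ^ 2) / 2 * (t ^ 2 + (1 - t) ^ 2) + 2 * A * B * (t * (1 - t))) :=
      mul_le_mul_of_nonneg_left (sq_mul_sq_mul_div_add_div_le A B t ht₀ ht₁) hc
    _ = _ := by ring

theorem intervalIntegrable_betaMajorant (A B : ℝ) {p q : ℝ} (hp : 1 < p) (hq : 1 < q) :
    IntervalIntegrable (betaMajorant A B p q) volume 0 1 := by
  have I := fun {α β : ℝ} (hα : -1 < α) (hβ : -1 < β) =>
    intervalIntegrable_rpow_mul_one_sub_rpow hα hβ
  exact (((I (by linarith) (by linarith)).add (I (by linarith) (by linarith))).const_mul _).add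
    ((I (by linarith) (by linarith)).const_mul _)

theorem integral_betaMajorant (A B : ℝ) {p q : ℝ} (hp : 1 < p) (hq : 1 < q) :
    ∫ t in (0:ℝ)..1, betaMajorant A B p q t =
      (A ^ 2 + B ^ 2) / 2 * (eulerBeta (p + 1) (q - 1) + eulerBeta (p - 1) (q + 1)) +
        2 * A * B * eulerBeta p q := by
  have I := fun {α β : ℝ} (hα : -1 < α) (hβ : -1 < β) =>
    intervalIntegrable_rpow_mul_one_sub_rpow hα hβ
  have I₁ := I (α := p) (β := q - 2) (by linarith) (by linarith)
  have I₂ := I (α := p - 2) (β := q) (by linarith) (by linarith)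
  have I₃ := I (α := p - 1) (β := q - 1) (by linarith) (by linarith)
  simp only [betaMajorant]
  rw [intervalIntegral.integral_add ((I₁.add I₂).const_mul _) (I₃.const_mul _),
    intervalIntegral.integral_const_mul, intervalIntegral.integral_const_mul,
    intervalIntegral.integral_add I₁ I₂]
  simp only [eulerBeta, add_sub_cancel_right, sub_sub, one_add_one_eq_two]

theorem GodunovaLevinOn.integrand_comp_le_betaMajorant {f : ℝ → ℝ} {a b : ℝ}
    (hQ : GodunovaLevinOn (Icc a b) f) (hnn : ∀ x ∈ Icc a b, 0 ≤ f x) (hab : a < b) (p q : ℝ)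
    {t : ℝ} (ht₀ : 0 < t) (ht₁ : t < 1) :
    ((b - a) * t + a - a) ^ p * (b - ((b - a) * t + a)) ^ q *
        (f ((b - a) * t + a) * f (a + b - ((b - a) * t + a))) ≤
      (b - a) ^ (p + q) * betaMajorant (f a) (f b) p q t := by
  have hba : 0 < b - a := sub_pos.2 hab
  have h1t : 0 < 1 - t := sub_pos.2 ht₁
  rw [show (b - a) * t + a - a = (b - a) * t by ring,
    show b - ((b - a) * t + a) = (b - a) * (1 - t) by ring,
    show (b - a) * t + a = t * b + (1 - t) * a by ring,
    show a + b - (t * b + (1 - t) * a) = t * a + (1 - t) * b by ring,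
    Real.mul_rpow hba.le ht₀.le, Real.mul_rpow hba.le h1t.le, Real.rpow_add hba]
  calc _ = (b - a) ^ p * (b - a) ^ q *
        (t ^ p * (1 - t) ^ q * (f (t * b + (1 - t) * a) * f (t * a + (1 - t) * b))) := by ring
    _ ≤ (b - a) ^ p * (b - a) ^ q *
        (t ^ p * (1 - t) ^ q * ((f b / t + f a / (1 - t)) * (f a / t + f b / (1 - t)))) := by
      have := hQ.mul_comp_reflect_le hnn hab.le ht₀ ht₁
      gcongr
    _ ≤ _ := by
      gcongr
      exact rpow_mul_one_sub_rpow_mul_le_betaMajorant _ _ p q ht₀ ht₁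

theorem thm_2_4_general (f : ℝ → ℝ) (a b : ℝ) (hab : a < b)
    (hnn : ∀ x ∈ Icc a b, 0 ≤ f x)
    (hQ : ∀ x ∈ Icc a b, ∀ y ∈ Icc a b, ∀ lam : ℝ, 0 < lam → lam < 1 →
      f (lam * x + (1 - lam) * y) ≤ f x / lam + f y / (1 - lam))
    (p q : ℝ) (hp : 1 < p) (hq : 1 < q) :
    ∫ x in a..b, (x - a) ^ p * (b - x) ^ q * (f x * f (a + b - x)) ≤
      (b - a) ^ (p + q + 1) / 2 *
        ((f a ^ 2 + f b ^ 2) * (eulerBeta (p + 1) (q - 1) + eulerBeta (p - 1) (q + 1)) +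
          4 * f a * f b * eulerBeta p q) := by
  have hba : 0 < b - a := sub_pos.2 hab
  have hmem : ∀ t ∈ Ioo (0:ℝ) 1, (b - a) * t + a ∈ Icc a b := fun t ht =>
    ⟨by nlinarith [ht.1], by nlinarith [ht.2]⟩
  have integrand_nonneg :
      ∀ x ∈ Icc a b, 0 ≤ (x - a) ^ p * (b - x) ^ q * (f x * f (a + b - x)) := fun x hx => by
    have := hnn x hx
    have := hnn (a + b - x) ⟨by linarith [hx.2], by linarith [hx.1]⟩
    have := sub_nonneg.2 hx.1
    have := sub_nonneg.2 hx.2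
    positivity
  calc ∫ x in a..b, (x - a) ^ p * (b - x) ^ q * (f x * f (a + b - x))
      = (b - a) * ∫ t in (0:ℝ)..1, ((b - a) * t + a - a) ^ p * (b - ((b - a) * t + a)) ^ q *
          (f ((b - a) * t + a) * f (a + b - ((b - a) * t + a))) := by
        simpa using (intervalIntegral.smul_integral_comp_mul_add (a := 0) (b := 1)
          (fun x => (x - a) ^ p * (b - x) ^ q * (f x * f (a + b - x))) (b - a) a).symm
    _ ≤ (b - a) * ∫ t in (0:ℝ)..1, (b - a) ^ (p + q) * betaMajorant (f a) (f b) p q t := by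
        gcongr
        refine intervalIntegral.integral_mono_of_nonneg_on_Ioo zero_le_one
          ((intervalIntegrable_betaMajorant _ _ hp hq).const_mul _) (fun t ht => ?_)
          (fun t ht => GodunovaLevinOn.integrand_comp_le_betaMajorant hQ hnn hab p q ht.1 ht.2)
        exact integrand_nonneg _ (hmem t ht)
    _ = _ := by
        rw [intervalIntegral.integral_const_mul, integral_betaMajorant _ _ hp hq,
          Real.rpow_add_one hba.ne']
        ring

theorem thm_2_4 (f : ℝ → ℝ) (a b : ℝ) (ha : 0 ≤ a) (hab : a < b)
    (hf : ContinuousOn f (Icc a b)) (hnn : ∀ x ∈ Icc a b, 0 ≤ f x)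
    (hQ : ∀ x ∈ Icc a b, ∀ y ∈ Icc a b, ∀ lam : ℝ, 0 < lam → lam < 1 →
      f (lam * x + (1 - lam) * y) ≤ f x / lam + f y / (1 - lam))
    (p q : ℝ) (hp : 1 < p) (hq : 1 < q) :
    ∫ x in a..b, (x - a) ^ p * (b - x) ^ q * (f x * f (a + b - x)) ≤
      (b - a) ^ (p + q + 1) / 2 *
        ((f a ^ 2 + f b ^ 2) * (eulerBeta (p + 1) (q - 1) + eulerBeta (p - 1) (q + 1)) +
          4 * f a * f b * eulerBeta p q) :=
  thm_2_4_general f a b hab hnn hQ p q hp hq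
end
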